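/- Let f be a Kneser function of order d≥1, h(r)=r^s g(r) with s,C∈(0,∞), g non-decreasing and differentiable with lim_{r→0} r·g'(r)/g(r) = 0. If lim_{r→0} f(r)/h(r)=C, then lim_{r→0} f'_+(r)/h'(r) = lim_{r→0} f'_−(r)/h'(r) = C, where h'(r)=s r^{s−1}g(r)+r^s g'(r). -/

import Mathlib

/-!
In the variable `u = r ^ d` the Kneser inequality says that chord slopes of
`F u = f (u ^ d⁻¹)` can only decrease when an interval is dilated by a factor `μ ≥ 1`. Dilating
`[p, √(pq)]` onto `[√(pq), q]` gives the concavity inequality at the geometric mean, and since a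
Kneser function is monotone and continuous this forces `F` to be concave on `(0, ∞)`. Hence both
one-sided derivatives `f'_±(r) = F'_±(r ^ d) · d r ^ (d - 1)` are squeezed between the chord slopes
of `F` over `[(r / κ) ^ d, r ^ d]` and `[r ^ d, (κ r) ^ d]`, `κ > 1`.

Write `h r = r ^ s g r`, so `h' r = h r / r · (s + r g' r / g r)`. The condition on `g'` makes `g`
slowly varying, `g (ρ r) / g r → 1`, so by `f ~ C h` the chord bound over `[r, ρ r]` divided by
`h' r` tends to `C · d (ρ ^ s - 1) / (s (ρ ^ d - 1))`, which tends to `C` as `ρ → 1` from either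
side.
-/

open Filter Set Topology

/-- A Kneser function of order `d`. -/
def IsKneser (f : ℝ → ℝ) (d : ℝ) : Prop :=
  (∀ x : ℝ, 0 < x → 0 < f x) ∧
  ∀ a b lam : ℝ, 0 < a → a ≤ b → 1 ≤ lam →
    f (lam * b) - f (lam * a) ≤ lam ^ d * (f b - f a)

theorem ContinuousOn.exists_Ioo_neg {ψ : ℝ → ℝ} {a b c : ℝ} (hψ : ContinuousOn ψ (Icc a c))
    (ha : 0 ≤ ψ a) (hc : 0 ≤ ψ c) (hb : b ∈ Icc a c) (hψb : ψ b < 0) :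
    ∃ u v, a ≤ u ∧ u < v ∧ v ≤ c ∧ 0 ≤ ψ u ∧ 0 ≤ ψ v ∧ ∀ t ∈ Ioo u v, ψ t < 0 := by
  set A := Icc a b ∩ ψ ⁻¹' Ici 0
  set B := Icc b c ∩ ψ ⁻¹' Ici 0
  have hA : sSup A ∈ A :=
    ((hψ.mono (Icc_subset_Icc le_rfl hb.2)).preimage_isClosed_of_isClosed isClosed_Icc
      isClosed_Ici).csSup_mem ⟨a, ⟨le_rfl, hb.1⟩, ha⟩ (bddAbove_Icc.mono inter_subset_left)
  have hB : sInf B ∈ B :=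
    ((hψ.mono (Icc_subset_Icc hb.1 le_rfl)).preimage_isClosed_of_isClosed isClosed_Icc
      isClosed_Ici).csInf_mem ⟨c, ⟨hb.2, le_rfl⟩, hc⟩ (bddBelow_Icc.mono inter_subset_left)
  have hAb : sSup A < b := hA.1.2.lt_of_ne fun h => hψb.not_ge (h ▸ hA.2)
  have hbB : b < sInf B := hB.1.1.lt_of_ne fun h => hψb.not_ge (h ▸ hB.2)
  refine ⟨sSup A, sInf B, hA.1.1, hAb.trans hbB, hB.1.2, hA.2, hB.2, fun t ht => ?_⟩
  by_contra! hψt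
  rcases le_total t b with htb | hbt
  · have htA : t ∈ A := ⟨⟨hA.1.1.trans ht.1.le, htb⟩, hψt⟩
    exact lt_irrefl _ (ht.1.trans_le (le_csSup (bddAbove_Icc.mono inter_subset_left) htA))
  · have htB : t ∈ B := ⟨⟨hbt, ht.2.le.trans hB.1.2⟩, hψt⟩
    exact lt_irrefl _ ((csInf_le (bddBelow_Icc.mono inter_subset_left) htB).trans_lt ht.2)

theorem concaveOn_of_exists_slope_le {s : Set ℝ} {φ : ℝ → ℝ} (hs : Convex ℝ s)
    (hφ : ContinuousOn φ s)
    (h : ∀ x ∈ s, ∀ y ∈ s, x < y → ∃ z ∈ Ioo x y, slope φ z y ≤ slope φ x z) :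
    ConcaveOn ℝ s φ := by
  refine concaveOn_of_slope_anti_adjacent hs fun {x y z} hx hz hxy hyz => ?_
  by_contra! hlt
  -- `ψ = φ - chord` vanishes at `x`, `z` and is negative at `y`; on a maximal interval `(u, v)`
  -- around `y` where `ψ < 0` no point `m` can satisfy the hypothesis
  set K := slope φ x z
  set ψ : ℝ → ℝ := fun t => φ t - (φ x + K * (t - x))
  have hφψ : ∀ t, φ t = ψ t + (φ x + K * (t - x)) := fun t => by ring
  have hψx : ψ x = 0 := by simp [ψ]
  have hψz : ψ z = 0 := by
    simp only [ψ, K, slope_def_field]; field_simp [(sub_pos.2 (hxy.trans hyz)).ne']; ring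
  have hψy : ψ y < 0 := by
    rw [div_lt_div_iff₀ (sub_pos.2 hxy) (sub_pos.2 hyz)] at hlt
    have : ψ y * (z - x) < 0 := by
      simp only [ψ, K, slope_def_field]; field_simp [(sub_pos.2 (hxy.trans hyz)).ne']; nlinarith
    exact neg_of_mul_neg_left this (sub_pos.2 (hxy.trans hyz)).le
  have hxz : Icc x z ⊆ s := hs.ordConnected.out hx hz
  have hψc : ContinuousOn ψ (Icc x z) := (hφ.mono hxz).sub (by fun_prop)
  obtain ⟨u, v, hxu, huv, hvz, hψu, hψv, hneg⟩ :=
    hψc.exists_Ioo_neg hψx.ge hψz.ge ⟨hxy.le, hyz.le⟩ hψy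
  obtain ⟨m, hm, hslope⟩ := h u (hxz ⟨hxu, huv.le.trans hvz⟩) v (hxz ⟨hxu.trans huv.le, hvz⟩) huv
  have hψm := hneg m hm
  rw [slope_def_field, slope_def_field, hφψ u, hφψ v, hφψ m,
    div_le_div_iff₀ (sub_pos.2 hm.2) (sub_pos.2 hm.1)] at hslope
  nlinarith [mul_pos (sub_pos.2 (hψm.trans_le hψv)) (sub_pos.2 hm.1),
    mul_pos (sub_pos.2 (hψm.trans_le hψu)) (sub_pos.2 hm.2)]

theorem ConcaveOn.differentiableWithinAt_Ioi_of_mem_interior {S : Set ℝ} {F : ℝ → ℝ} {x : ℝ}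
    (hF : ConcaveOn ℝ S F) (hx : x ∈ interior S) : DifferentiableWithinAt ℝ F (Ioi x) x := by
  simpa using (hF.neg.differentiableWithinAt_Ioi_of_mem_interior hx).neg

theorem ConcaveOn.differentiableWithinAt_Iio_of_mem_interior {S : Set ℝ} {F : ℝ → ℝ} {x : ℝ}
    (hF : ConcaveOn ℝ S F) (hx : x ∈ interior S) : DifferentiableWithinAt ℝ F (Iio x) x := by
  simpa using (hF.neg.differentiableWithinAt_Iio_of_mem_interior hx).neg

theorem ConcaveOn.rightDeriv_le_leftDeriv_of_mem_interior {S : Set ℝ} {F : ℝ → ℝ} {x : ℝ}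
    (hF : ConcaveOn ℝ S F) (hx : x ∈ interior S) :
    derivWithin F (Ioi x) x ≤ derivWithin F (Iio x) x := by
  simpa [derivWithin.neg] using hF.neg.leftDeriv_le_rightDeriv_of_mem_interior hx

theorem hasDerivWithinAt_Ioi_of_comp_rpow_inv {f : ℝ → ℝ} {d r F' : ℝ} (hd : 0 < d) (hr : 0 < r)
    (hF : HasDerivWithinAt (fun u => f (u ^ d⁻¹)) F' (Ioi (r ^ d)) (r ^ d)) :
    HasDerivWithinAt f (F' * (d * r ^ (d - 1))) (Ioi r) r := by
  have hmaps : MapsTo (fun y : ℝ => y ^ d) (Ioi r) (Ioi (r ^ d)) :=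
    fun y hy => Real.rpow_lt_rpow hr.le hy hd
  have h := hF.comp r ((Real.hasDerivAt_rpow_const (p := d) (Or.inl hr.ne')).hasDerivWithinAt) hmaps
  refine h.congr (fun y hy => ?_) ?_
  · simp [Real.rpow_rpow_inv (hr.trans hy).le hd.ne']
  · simp [Real.rpow_rpow_inv hr.le hd.ne']

theorem hasDerivWithinAt_Iio_of_comp_rpow_inv {f : ℝ → ℝ} {d r F' : ℝ} (hd : 0 < d) (hr : 0 < r)
    (hF : HasDerivWithinAt (fun u => f (u ^ d⁻¹)) F' (Iio (r ^ d)) (r ^ d)) :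
    HasDerivWithinAt f (F' * (d * r ^ (d - 1))) (Iio r) r := by
  have hmaps : MapsTo (fun y : ℝ => y ^ d) (Ioo 0 r) (Iio (r ^ d)) :=
    fun y hy => Real.rpow_lt_rpow hy.1.le hy.2 hd
  have h := hF.comp r ((Real.hasDerivAt_rpow_const (p := d) (Or.inl hr.ne')).hasDerivWithinAt) hmaps
  refine (h.congr (fun y hy => ?_) ?_).mono_of_mem_nhdsWithin (Ioo_mem_nhdsLT hr)
  · simp [Real.rpow_rpow_inv hy.1.le hd.ne']
  · simp [Real.rpow_rpow_inv hr.le hd.ne']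

theorem tendsto_const_mul_nhdsGT_zero {ρ : ℝ} (hρ : 0 < ρ) :
    Tendsto (fun r => ρ * r) (𝓝[>] 0) (𝓝[>] 0) :=
  tendsto_iff_comap.2 (comap_mulLeft_nhdsGT_zero hρ).ge

theorem tendsto_rpow_sub_one_div_rpow_sub_one (s : ℝ) {d : ℝ} (hd : d ≠ 0) :
    Tendsto (fun ρ : ℝ => (ρ ^ s - 1) / (ρ ^ d - 1)) (𝓝[≠] 1) (𝓝 (s / d)) := by
  have hslope (p : ℝ) : Tendsto (slope (fun x : ℝ => x ^ p) 1) (𝓝[≠] 1) (𝓝 p) := by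
    simpa using hasDerivAt_iff_tendsto_slope.1
      (Real.hasDerivAt_rpow_const (x := 1) (p := p) (Or.inl one_ne_zero))
  refine ((hslope s).div (hslope d) hd).congr' ?_
  filter_upwards [self_mem_nhdsWithin] with ρ hρ
  simp only [Pi.div_apply, slope_def_field, Real.one_rpow]
  exact div_div_div_cancel_right₀ (sub_ne_zero.2 hρ) _ _

section SlowlyVarying

variable {g : ℝ → ℝ} (hg_pos : ∀ r : ℝ, 0 < r → 0 < g r)
  (hg_diff : ∀ r : ℝ, 0 < r → DifferentiableAt ℝ g r)
  (hg_slow : Tendsto (fun r : ℝ => r * deriv g r / g r) (𝓝[>] (0 : ℝ)) (𝓝 0))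
include hg_pos hg_diff hg_slow

theorem tendsto_log_apply_mul_sub_log_apply {κ : ℝ} (hκ : 1 ≤ κ) :
    Tendsto (fun r => Real.log (g (κ * r)) - Real.log (g r)) (𝓝[>] 0) (𝓝 0) := by
  have hκ0 : 0 < κ := one_pos.trans_le hκ
  refine Metric.tendsto_nhds.2 fun ε hε => ?_
  obtain ⟨δ, hδ, hsmall⟩ := mem_nhdsGT_iff_exists_Ioo_subset.1
    (Metric.tendsto_nhds.1 hg_slow (ε / κ) (div_pos hε hκ0))
  filter_upwards [Ioo_mem_nhdsGT (div_pos (mem_Ioi.1 hδ) hκ0)] with r hr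
  have hr0 : 0 < r := hr.1
  have hκr : κ * r < δ := by have := hr.2; rw [lt_div_iff₀ hκ0] at this; linarith
  have hderiv : ∀ c ∈ Icc r (κ * r),
      HasDerivWithinAt (fun t => Real.log (g t)) (deriv g c / g c) (Icc r (κ * r)) c :=
    fun c hc => (((hg_diff c (hr0.trans_le hc.1)).hasDerivAt.log
      (hg_pos c (hr0.trans_le hc.1)).ne').hasDerivWithinAt)
  have hbound : ∀ c ∈ Ico r (κ * r), ‖deriv g c / g c‖ ≤ ε / κ / r := by
    intro c hc
    have hc0 : 0 < c := hr0.trans_le hc.1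
    have hsc : |c * deriv g c / g c| < ε / κ := by
      simpa only [mem_ofPred_eq, Real.dist_eq, sub_zero] using hsmall ⟨hc0, hc.2.trans hκr⟩
    rw [mul_div_assoc, abs_mul, abs_of_pos hc0] at hsc
    rw [Real.norm_eq_abs, le_div_iff₀ hr0]
    nlinarith [abs_nonneg (deriv g c / g c), hc.1]
  have hmvt := norm_image_sub_le_of_norm_deriv_le_segment' hderiv hbound (κ * r)
    ⟨le_mul_of_one_le_left hr0.le hκ, le_rfl⟩
  rw [Real.dist_eq, sub_zero, ← Real.norm_eq_abs]
  calc _ ≤ ε / κ / r * (κ * r - r) := hmvt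
    _ = ε * (1 - κ⁻¹) := by field_simp
    _ < ε := by nlinarith [inv_pos.2 hκ0]

theorem tendsto_apply_mul_div_apply {ρ : ℝ} (hρ : 0 < ρ) :
    Tendsto (fun r => g (ρ * r) / g r) (𝓝[>] 0) (𝓝 1) := by
  have hge (κ : ℝ) (hκ : 1 ≤ κ) : Tendsto (fun r => g (κ * r) / g r) (𝓝[>] 0) (𝓝 1) := by
    have hκ0 : 0 < κ := one_pos.trans_le hκ
    have h := (Real.continuous_exp.tendsto 0).comp
      (tendsto_log_apply_mul_sub_log_apply hg_pos hg_diff hg_slow hκ)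
    rw [Real.exp_zero] at h
    refine h.congr' ?_
    filter_upwards [self_mem_nhdsWithin] with r (hr : 0 < r)
    simp [Real.exp_sub, Real.exp_log (hg_pos _ (mul_pos hκ0 hr)), Real.exp_log (hg_pos r hr)]
  rcases le_total 1 ρ with hρ1 | hρ1
  · exact hge ρ hρ1
  · -- `g (ρ r) / g r = (g (ρ⁻¹ (ρ r)) / g (ρ r))⁻¹`
    have h := ((hge ρ⁻¹ (one_le_inv₀ hρ |>.2 hρ1)).comp (tendsto_const_mul_nhdsGT_zero hρ)).inv₀
      one_ne_zero
    simpa [Function.comp_def, inv_mul_cancel_left₀ hρ.ne'] using h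

end SlowlyVarying

section GaugeAsymptotics

variable {f g : ℝ → ℝ} {d s C : ℝ} (hg_pos : ∀ r : ℝ, 0 < r → 0 < g r)
include hg_pos

theorem gauge_deriv_eq {r : ℝ} (hr : 0 < r) :
    s * r ^ (s - 1) * g r + r ^ s * deriv g r = r ^ s * g r / r * (s + r * deriv g r / g r) := by
  rw [Real.rpow_sub_one hr.ne']
  field_simp [(hg_pos r hr).ne']

variable (hg_slow : Tendsto (fun r : ℝ => r * deriv g r / g r) (𝓝[>] (0 : ℝ)) (𝓝 0))
include hg_slow

theorem eventually_gauge_deriv_pos (hs : 0 < s) :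
    ∀ᶠ r in 𝓝[>] 0, 0 < s * r ^ (s - 1) * g r + r ^ s * deriv g r := by
  filter_upwards [self_mem_nhdsWithin, (hg_slow.const_add s).eventually (lt_mem_nhds (by simpa))]
    with r (hr : 0 < r) hE
  rw [gauge_deriv_eq hg_pos hr]
  have := hg_pos r hr
  positivity

variable (hg_diff : ∀ r : ℝ, 0 < r → DifferentiableAt ℝ g r)
  (hlim : Tendsto (fun r : ℝ => f r / (r ^ s * g r)) (𝓝[>] (0 : ℝ)) (𝓝 C))
include hg_diff hlim

theorem tendsto_sub_div_rpow_sub_mul_div_gauge_deriv (hd : d ≠ 0) (hs : s ≠ 0) {ρ : ℝ}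
    (hρ : 0 < ρ) (hρ1 : ρ ≠ 1) :
    Tendsto (fun r => (f (ρ * r) - f r) / ((ρ * r) ^ d - r ^ d) * (d * r ^ (d - 1)) /
        (s * r ^ (s - 1) * g r + r ^ s * deriv g r))
      (𝓝[>] 0) (𝓝 (C * (d / s) * ((ρ ^ s - 1) / (ρ ^ d - 1)))) := by
  have hρd : ρ ^ d - 1 ≠ 0 := sub_ne_zero.2 fun h =>
    hρ1 ((Real.rpow_left_inj hρ.le zero_le_one hd).1 (h.trans (Real.one_rpow d).symm))
  have hscaled := hlim.comp (tendsto_const_mul_nhdsGT_zero hρ)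
  have hratio := tendsto_apply_mul_div_apply hg_pos hg_diff hg_slow hρ
  -- `(f (ρ r) - f r) / h r → C (ρ ^ s - 1)` and `r h' r / h r → s`, with `h r = r ^ s g r`
  have hmodel := ((hscaled.mul (hratio.const_mul (ρ ^ s))).sub hlim).div (hg_slow.const_add s)
    (by simpa using hs) |>.const_mul (d / (ρ ^ d - 1))
  convert hmodel.congr' ?_ using 2
  · simp only [add_zero, mul_one]; field_simp
  filter_upwards [self_mem_nhdsWithin] with r (hr : 0 < r)
  have := hg_pos r hr
  have := hg_pos (ρ * r) (mul_pos hρ hr)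
  simp only [Function.comp_def, Pi.div_apply, Real.mul_rpow hρ.le hr.le, Real.rpow_sub_one hr.ne']
  field_simp

theorem tendsto_div_gauge_deriv_of_slope_bounds (hd : d ≠ 0) (hs : 0 < s) {D : ℝ → ℝ}
    (hlow : ∀ r x, 0 < r → r < x → (f x - f r) / (x ^ d - r ^ d) * (d * r ^ (d - 1)) ≤ D r)
    (hup : ∀ r x, 0 < x → x < r → D r ≤ (f x - f r) / (x ^ d - r ^ d) * (d * r ^ (d - 1))) :
    Tendsto (fun r => D r / (s * r ^ (s - 1) * g r + r ^ s * deriv g r)) (𝓝[>] 0) (𝓝 C) := by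
  have hL : Tendsto (fun ρ : ℝ => C * (d / s) * ((ρ ^ s - 1) / (ρ ^ d - 1))) (𝓝[≠] 1) (𝓝 C) := by
    convert (tendsto_rpow_sub_one_div_rpow_sub_one s hd).const_mul (C * (d / s)) using 2
    field_simp
  have hQ {ρ : ℝ} (hρ : 0 < ρ) (hρ1 : ρ ≠ 1) :=
    tendsto_sub_div_rpow_sub_mul_div_gauge_deriv hg_pos hg_slow hg_diff hlim hd hs.ne' hρ hρ1
  have hpos := eventually_gauge_deriv_pos hg_pos hg_slow hs
  refine tendsto_order.2 ⟨fun a ha => ?_, fun b hb => ?_⟩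
  · obtain ⟨ρ, hρa, hρ1 : 1 < ρ⟩ :=
      (((hL.mono_left (nhdsGT_le_nhdsNE 1)).eventually (lt_mem_nhds ha)).and
        self_mem_nhdsWithin).exists
    filter_upwards [(hQ (by linarith) hρ1.ne').eventually (lt_mem_nhds hρa), hpos,
      self_mem_nhdsWithin] with r hlt hh (hr : 0 < r)
    exact hlt.trans_le
      (div_le_div_of_nonneg_right (hlow r _ hr (lt_mul_of_one_lt_left hr hρ1)) hh.le)
  · obtain ⟨ρ, hρb, hρ : ρ ∈ Ioo 0 1⟩ :=
      (((hL.mono_left (nhdsLT_le_nhdsNE 1)).eventually (gt_mem_nhds hb)).and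
        (Ioo_mem_nhdsLT zero_lt_one)).exists
    filter_upwards [(hQ hρ.1 hρ.2.ne).eventually (gt_mem_nhds hρb), hpos,
      self_mem_nhdsWithin] with r hlt hh (hr : 0 < r)
    exact (div_le_div_of_nonneg_right (hup r _ (mul_pos hρ.1 hr) (mul_lt_of_lt_one_left hr hρ.2))
      hh.le).trans_lt hlt

end GaugeAsymptotics

namespace IsKneser

variable {f : ℝ → ℝ} {d : ℝ}

theorem monotoneOn (hf : IsKneser f d) (hd : 0 ≤ d) : MonotoneOn f (Ioi 0) := by
  intro a ha b _ hab
  by_contra! hba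
  set ρ := b / a
  have hρ : 1 ≤ ρ := (one_le_div ha).2 hab
  -- `f` drops by `≥ f a - f b` across each `[ρ ^ n * a, ρ ^ n * b]`; these intervals abut
  have hdrop : ∀ n : ℕ, f (ρ ^ n * b) ≤ f b - n * (f a - f b) := by
    intro n
    induction n with
    | zero => simp
    | succ n ih =>
      have hρn : 1 ≤ ρ ^ (n + 1) := one_le_pow₀ hρ
      have hK := hf.2 a b _ ha hab hρn
      have hpow : 1 ≤ (ρ ^ (n + 1)) ^ d := Real.one_le_rpow hρn hd
      have hshift : ρ ^ (n + 1) * a = ρ ^ n * b := by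
        rw [pow_succ, mul_assoc, div_mul_cancel₀ b ha.ne']
      rw [hshift] at hK
      push_cast
      nlinarith
  obtain ⟨n, hn⟩ := exists_nat_gt (f b / (f a - f b))
  have hpos := hf.1 (ρ ^ n * b) (by have := ha.trans_le hab; positivity)
  have := hdrop n
  rw [div_lt_iff₀ (sub_pos.2 hba)] at hn
  linarith

theorem exists_sub_lt (hf : IsKneser f d) (hd : 0 ≤ d) {x ε : ℝ} (hx : 0 < x) (hε : 0 < ε) :
    ∃ a b, 0 < a ∧ a < x ∧ x < b ∧ f b - f a < ε := by
  have hmono := hf.monotoneOn hd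
  have h2d : 0 < (2 : ℝ) ^ d := by positivity
  have hbdd : BddAbove (f '' Ioo (x / 2) x) :=
    ⟨f x, by rintro _ ⟨t, ht, rfl⟩; exact hmono (mem_Ioi.2 (by linarith [ht.1])) hx ht.2.le⟩
  obtain ⟨_, ⟨y, hy, rfl⟩, hfy⟩ := exists_lt_of_lt_csSup ((nonempty_Ioo.2 (by linarith)).image f)
    (sub_lt_self (sSup (f '' Ioo (x / 2) x)) (div_pos hε h2d))
  -- `[y, b]` lies left of `x` and has small oscillation; scaling it by `λ ∈ [1, 2]` covers `x`
  set b := (y + x) / 2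
  have hy0 : 0 < y := by linarith [hy.1]
  have hyb : y < b := by simp only [b]; linarith [hy.2]
  have hfb : f b ≤ sSup (f '' Ioo (x / 2) x) :=
    le_csSup hbdd ⟨b, ⟨by simp only [b]; linarith [hy.1], by simp only [b]; linarith [hy.2]⟩, rfl⟩
  set lam := 2 * x / (y + b)
  have hlam1 : 1 ≤ lam := by rw [le_div_iff₀ (by linarith)]; simp only [b]; linarith [hy.2]
  have hlam2 : lam ≤ 2 := by rw [div_le_iff₀ (by linarith)]; simp only [b]; linarith [hy.1]
  have hK := hf.2 y b lam hy0 hyb.le hlam1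
  have hosc : lam ^ d * (f b - f y) < ε := by
    have hfyb : 0 ≤ f b - f y := sub_nonneg.2 (hmono hy0 (hy0.trans hyb) hyb.le)
    calc lam ^ d * (f b - f y) ≤ 2 ^ d * (f b - f y) := by
          gcongr
      _ < 2 ^ d * (ε / 2 ^ d) := by gcongr; linarith
      _ = ε := mul_div_cancel₀ ε h2d.ne'
  refine ⟨lam * y, lam * b, by positivity, ?_, ?_, hK.trans_lt hosc⟩
  · rw [div_mul_eq_mul_div, div_lt_iff₀ (by linarith)]; nlinarith
  · rw [div_mul_eq_mul_div, lt_div_iff₀ (by linarith)]; nlinarith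

theorem continuousAt (hf : IsKneser f d) (hd : 0 ≤ d) {x : ℝ} (hx : 0 < x) : ContinuousAt f x := by
  have hmono := hf.monotoneOn hd
  refine tendsto_order.2 ⟨fun e he => ?_, fun e he => ?_⟩
  · obtain ⟨a, b, ha, hax, hxb, hab⟩ := hf.exists_sub_lt hd hx (sub_pos.2 he)
    filter_upwards [Ioo_mem_nhds hax hxb] with y hy
    linarith [hmono ha (ha.trans hy.1) hy.1.le, hmono hx (hx.trans hxb) hxb.le]
  · obtain ⟨a, b, ha, hax, hxb, hab⟩ := hf.exists_sub_lt hd hx (sub_pos.2 he)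
    filter_upwards [Ioo_mem_nhds hax hxb] with y hy
    linarith [hmono (ha.trans hy.1) (hx.trans hxb) hy.2.le, hmono ha hx hax.le]

theorem slope_comp_rpow_inv_le (hf : IsKneser f d) (hd : 0 < d) {p q : ℝ} (hp : 0 < p)
    (hpq : p < q) :
    slope (fun u => f (u ^ d⁻¹)) √(p * q) q ≤ slope (fun u => f (u ^ d⁻¹)) p √(p * q) := by
  set m := √(p * q)
  have hm : m * m = p * q := Real.mul_self_sqrt (by nlinarith)
  have hm0 : 0 < m := Real.sqrt_pos.2 (by nlinarith)
  have hpm : p < m := by nlinarith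
  have hmq : m < q := by nlinarith
  -- Kneser's inequality with `λ = (m / p) ^ d⁻¹`: in `u = x ^ d` it dilates `[p, m]` onto `[m, q]`
  have hK := hf.2 (p ^ d⁻¹) (m ^ d⁻¹) ((m / p) ^ d⁻¹) (by positivity)
    (Real.rpow_le_rpow hp.le hpm.le (by positivity))
    (Real.one_le_rpow ((one_le_div hp).2 hpm.le) (by positivity))
  have hmp : m / p * m = q := by field_simp; linarith
  rw [← Real.mul_rpow (by positivity) hp.le, ← Real.mul_rpow (by positivity) hm0.le,
    div_mul_cancel₀ _ hp.ne', hmp, Real.rpow_inv_rpow (by positivity) hd.ne'] at hK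
  rw [slope_def_field, slope_def_field, div_le_div_iff₀ (sub_pos.2 hmq) (sub_pos.2 hpm)]
  have hqm : q - m = m / p * (m - p) := by field_simp; linarith
  rw [hqm]
  have := mul_le_mul_of_nonneg_right hK (sub_pos.2 hpm).le
  nlinarith

theorem concaveOn_comp_rpow_inv (hf : IsKneser f d) (hd : 0 < d) :
    ConcaveOn ℝ (Ioi 0) (fun u => f (u ^ d⁻¹)) := by
  refine concaveOn_of_exists_slope_le (convex_Ioi 0) (fun u hu => ?_) fun p hp q _ hpq => ?_
  · exact ((hf.continuousAt hd.le (Real.rpow_pos_of_pos hu d⁻¹)).comp (f := fun u : ℝ => u ^ d⁻¹)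
      (Real.continuousAt_rpow_const _ _ (Or.inl (ne_of_gt hu)))).continuousWithinAt
  · have hq : 0 < q := (mem_Ioi.1 hp).trans hpq
    refine ⟨√(p * q), ⟨(Real.lt_sqrt (mem_Ioi.1 hp).le).2 (by nlinarith [mem_Ioi.1 hp]),
      (Real.sqrt_lt' hq).2 (by nlinarith)⟩, hf.slope_comp_rpow_inv_le hd hp hpq⟩

theorem slope_mul_le_rightDeriv (hf : IsKneser f d) (hd : 0 < d) {r x : ℝ} (hr : 0 < r)
    (hrx : r < x) :
    (f x - f r) / (x ^ d - r ^ d) * (d * r ^ (d - 1)) ≤ derivWithin f (Ioi r) r := by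
  have hF := hf.concaveOn_comp_rpow_inv hd
  have hrd : r ^ d ∈ interior (Ioi 0) := by rw [interior_Ioi]; exact Real.rpow_pos_of_pos hr d
  have hdiff := hF.differentiableWithinAt_Ioi_of_mem_interior hrd
  rw [(hasDerivWithinAt_Ioi_of_comp_rpow_inv hd hr hdiff.hasDerivWithinAt).derivWithin
    (uniqueDiffWithinAt_Ioi r)]
  have hslope := hF.slope_le_rightDeriv (interior_subset hrd)
    (Real.rpow_pos_of_pos (hr.trans hrx) d) (Real.rpow_lt_rpow hr.le hrx hd) hdiff
  simp only [slope_def_field, Real.rpow_rpow_inv (hr.trans hrx).le hd.ne',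
    Real.rpow_rpow_inv hr.le hd.ne'] at hslope
  gcongr

theorem leftDeriv_le_slope_mul (hf : IsKneser f d) (hd : 0 < d) {r x : ℝ} (hx : 0 < x)
    (hxr : x < r) :
    derivWithin f (Iio r) r ≤ (f x - f r) / (x ^ d - r ^ d) * (d * r ^ (d - 1)) := by
  have hr := hx.trans hxr
  have hF := hf.concaveOn_comp_rpow_inv hd
  have hrd : r ^ d ∈ interior (Ioi 0) := by rw [interior_Ioi]; exact Real.rpow_pos_of_pos hr d
  have hdiff := hF.differentiableWithinAt_Iio_of_mem_interior hrd
  rw [(hasDerivWithinAt_Iio_of_comp_rpow_inv hd hr hdiff.hasDerivWithinAt).derivWithin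
    (uniqueDiffWithinAt_Iio r)]
  have hslope := hF.leftDeriv_le_slope (Real.rpow_pos_of_pos hx d) (interior_subset hrd)
    (Real.rpow_lt_rpow hx.le hxr hd) hdiff
  simp only [slope_comm _ (x ^ d), slope_def_field, Real.rpow_rpow_inv hx.le hd.ne',
    Real.rpow_rpow_inv hr.le hd.ne'] at hslope
  gcongr

theorem rightDeriv_le_leftDeriv (hf : IsKneser f d) (hd : 0 < d) {r : ℝ} (hr : 0 < r) :
    derivWithin f (Ioi r) r ≤ derivWithin f (Iio r) r := by
  have hF := hf.concaveOn_comp_rpow_inv hd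
  have hrd : r ^ d ∈ interior (Ioi 0) := by rw [interior_Ioi]; exact Real.rpow_pos_of_pos hr d
  rw [(hasDerivWithinAt_Ioi_of_comp_rpow_inv hd hr
      (hF.differentiableWithinAt_Ioi_of_mem_interior hrd).hasDerivWithinAt).derivWithin
      (uniqueDiffWithinAt_Ioi r),
    (hasDerivWithinAt_Iio_of_comp_rpow_inv hd hr
      (hF.differentiableWithinAt_Iio_of_mem_interior hrd).hasDerivWithinAt).derivWithin
      (uniqueDiffWithinAt_Iio r)]
  gcongr
  exact hF.rightDeriv_le_leftDeriv_of_mem_interior hrd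

end IsKneser

theorem kneser_lim_exists_gauge_deriv_general (f g : ℝ → ℝ) (d s C : ℝ) (hd : 1 ≤ d)
    (hf : IsKneser f d) (hs : 0 < s)
    (hg_pos : ∀ r : ℝ, 0 < r → 0 < g r)
    (hg_diff : ∀ r : ℝ, 0 < r → DifferentiableAt ℝ g r)
    (hg_slow : Filter.Tendsto (fun r : ℝ => r * deriv g r / g r) (𝓝[>] (0 : ℝ)) (𝓝 0))
    (hlim : Filter.Tendsto (fun r : ℝ => f r / (r ^ s * g r)) (𝓝[>] (0 : ℝ)) (𝓝 C)) :
    Filter.Tendsto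
        (fun r : ℝ => derivWithin f (Set.Ioi r) r / (s * r ^ (s - 1) * g r + r ^ s * deriv g r))
        (𝓝[>] (0 : ℝ)) (𝓝 C) ∧
      Filter.Tendsto
        (fun r : ℝ => derivWithin f (Set.Iio r) r / (s * r ^ (s - 1) * g r + r ^ s * deriv g r))
        (𝓝[>] (0 : ℝ)) (𝓝 C) := by
  have hd0 : 0 < d := by linarith
  have hright_le_left {r : ℝ} (hr : 0 < r) := hf.rightDeriv_le_leftDeriv hd0 hr
  constructor
  · exact tendsto_div_gauge_deriv_of_slope_bounds hg_pos hg_slow hg_diff hlim hd0.ne' hs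
      (fun r x hr hrx => hf.slope_mul_le_rightDeriv hd0 hr hrx)
      (fun r x hx hxr =>
        (hright_le_left (hx.trans hxr)).trans (hf.leftDeriv_le_slope_mul hd0 hx hxr))
  · exact tendsto_div_gauge_deriv_of_slope_bounds hg_pos hg_slow hg_diff hlim hd0.ne' hs
      (fun r x hr hrx => (hf.slope_mul_le_rightDeriv hd0 hr hrx).trans (hright_le_left hr))
      (fun r x hx hxr => hf.leftDeriv_le_slope_mul hd0 hx hxr)

theorem kneser_lim_exists_gauge_deriv (f g : ℝ → ℝ) (d s C : ℝ) (hd : 1 ≤ d)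
    (hf : IsKneser f d) (hs : 0 < s) (hC : 0 < C)
    (hg_pos : ∀ r : ℝ, 0 < r → 0 < g r) (hg_mono : MonotoneOn g (Set.Ioi 0))
    (hg_diff : ∀ r : ℝ, 0 < r → DifferentiableAt ℝ g r)
    (hg_slow : Filter.Tendsto (fun r : ℝ => r * deriv g r / g r) (𝓝[>] (0 : ℝ)) (𝓝 0))
    (hlim : Filter.Tendsto (fun r : ℝ => f r / (r ^ s * g r)) (𝓝[>] (0 : ℝ)) (𝓝 C)) :
    Filter.Tendsto
        (fun r : ℝ => derivWithin f (Set.Ioi r) r / (s * r ^ (s - 1) * g r + r ^ s * deriv g r))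
        (𝓝[>] (0 : ℝ)) (𝓝 C) ∧
      Filter.Tendsto
        (fun r : ℝ => derivWithin f (Set.Iio r) r / (s * r ^ (s - 1) * g r + r ^ s * deriv g r))
        (𝓝[>] (0 : ℝ)) (𝓝 C) :=
  kneser_lim_exists_gauge_deriv_general f g d s C hd hf hs hg_pos hg_diff hg_slow hlim
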